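/- arXiv:1110.0963 — 5 statements merged into one kernel-verified Lean document; each statement's English description precedes it below -/
import Mathlib

section
/- Let X be an ℝ^d-valued random vector with marginal distribution functions F_1,…,F_d, let u ≤ v (componentwise) in [−∞,∞]^d, and let g, h : ℝ^d → [0,1] be measurable functions with g ≤ h pointwise, 1_{(−∞,u]} ≤ g and h ≤ 1_{(−∞,v]}. Then for every r ∈ [1,∞): ‖ h(X) − g(X) ‖_r ≤ ( Σ_{i=1}^d ( F_i(v_i) − F_i(u_i) ) )^{1/r}, where ‖Y‖_r = (E|Y|^r)^{1/r}. -/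
open MeasureTheory Filter Set

noncomputable section

/-- The indicator function of the generalized rectangle `(-∞, a]`, `a ∈ [-∞,∞]^d`. -/
def indLE {d : ℕ} (a : Fin d → EReal) : (Fin d → ℝ) → ℝ :=
  Set.indicator {x : Fin d → ℝ | ∀ i, (x i : EReal) ≤ a i} 1

/-- The i-th marginal distribution function of `X`, extended to `[-∞,∞]`. -/
def margCdf {Ω : Type*} [MeasurableSpace Ω] {d : ℕ} (P : Measure Ω)
    (X : Ω → (Fin d → ℝ)) (i : Fin d) (x : EReal) : ℝ :=
  (P {ω | (X ω i : EReal) ≤ x}).toReal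

/-!
Since `1_{(-∞,u]} ≤ g ≤ h ≤ 1_{(-∞,v]}`, the difference `h - g` takes values in `[0,1]`, so
`|h - g|^r ≤ h - g ≤ 1_{(-∞,v]} - 1_{(-∞,u]}`, and a point of `(-∞,v] \ (-∞,u]` has some
coordinate in `(u_i, v_i]`. Hence `|h(X) - g(X)|^r ≤ ∑ i, 1{u_i < X_i ≤ v_i}`, whose expectation is
`∑ i, (F_i(v_i) - F_i(u_i))`.
-/

def slab {d : ℕ} (u v : Fin d → EReal) (i : Fin d) : Set (Fin d → ℝ) :=
  {x | (x i : EReal) ∈ Ioc (u i) (v i)}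

lemma indLE_nonneg {d : ℕ} (a : Fin d → EReal) (x : Fin d → ℝ) : 0 ≤ indLE a x :=
  indicator_nonneg (fun _ _ => zero_le_one) x

lemma indLE_le_one {d : ℕ} (a : Fin d → EReal) (x : Fin d → ℝ) : indLE a x ≤ 1 :=
  indicator_le_self' (fun _ _ => zero_le_one) x

lemma indLE_sub_indLE_le_sum_indicator_slab {d : ℕ} (u v : Fin d → EReal) (x : Fin d → ℝ) :
    indLE v x - indLE u x ≤ ∑ i, (slab u v i).indicator 1 x := by
  have hsum_nonneg : (0 : ℝ) ≤ ∑ i, (slab u v i).indicator 1 x :=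
    Finset.sum_nonneg fun i _ => indicator_nonneg (fun _ _ => zero_le_one) x
  by_cases hv : ∀ i, (x i : EReal) ≤ v i
  · by_cases hu : ∀ i, (x i : EReal) ≤ u i
    · simp only [indLE, indicator_of_mem (show x ∈ {y | ∀ i, (y i : EReal) ≤ u i} from hu),
        indicator_of_mem (show x ∈ {y | ∀ i, (y i : EReal) ≤ v i} from hv), sub_self]
      exact hsum_nonneg
    · obtain ⟨i, hi⟩ := not_forall.1 hu
      have hx : x ∈ slab u v i := ⟨not_le.1 hi, hv i⟩
      calc indLE v x - indLE u x ≤ 1 := by linarith [indLE_le_one v x, indLE_nonneg u x]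
        _ = (slab u v i).indicator 1 x := (indicator_of_mem hx 1).symm
        _ ≤ _ := Finset.single_le_sum (fun j _ => indicator_nonneg (fun _ _ => zero_le_one) x)
          (Finset.mem_univ i)
  · have : indLE v x = 0 :=
      indicator_of_notMem (show x ∉ {y | ∀ i, (y i : EReal) ≤ v i} from hv) 1
    linarith [indLE_nonneg u x]

lemma abs_sub_rpow_le_sum_indicator_slab {d : ℕ} {u v : Fin d → EReal}
    {g h : (Fin d → ℝ) → ℝ} (hgh : ∀ x, g x ≤ h x) (hlow : ∀ x, indLE u x ≤ g x)
    (hupp : ∀ x, h x ≤ indLE v x) {r : ℝ} (hr : 1 ≤ r) (x : Fin d → ℝ) :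
    |h x - g x| ^ r ≤ ∑ i, (slab u v i).indicator 1 x := by
  have hdiff : h x - g x ≤ indLE v x - indLE u x := sub_le_sub (hupp x) (hlow x)
  have hnonneg : 0 ≤ h x - g x := sub_nonneg.2 (hgh x)
  have hle_one : h x - g x ≤ 1 := by linarith [indLE_le_one v x, indLE_nonneg u x]
  calc |h x - g x| ^ r = (h x - g x) ^ r := by rw [abs_of_nonneg hnonneg]
    _ ≤ h x - g x := Real.rpow_le_self_of_le_one hnonneg hle_one hr
    _ ≤ indLE v x - indLE u x := hdiff
    _ ≤ _ := indLE_sub_indLE_le_sum_indicator_slab u v x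

lemma measurableSet_slab {d : ℕ} (u v : Fin d → EReal) (i : Fin d) :
    MeasurableSet (slab u v i) :=
  measurableSet_Ioc.preimage (measurable_coe_real_ereal.comp (measurable_pi_apply i))

section MarginalCdf

variable {Ω : Type*} [MeasurableSpace Ω] {d : ℕ} (P : Measure Ω) [IsFiniteMeasure P]
  {X : Ω → (Fin d → ℝ)}

lemma margCdf_sub_margCdf (hX : Measurable X) {u v : Fin d → EReal} (i : Fin d)
    (huv : u i ≤ v i) :
    margCdf P X i (v i) - margCdf P X i (u i) = P.real (X ⁻¹' slab u v i) := by
  have hXi : Measurable fun ω => (X ω i : EReal) :=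
    measurable_coe_real_ereal.comp ((measurable_pi_apply i).comp hX)
  have hsub : {ω | (X ω i : EReal) ≤ u i} ⊆ {ω | (X ω i : EReal) ≤ v i} :=
    fun _ hω => hω.trans huv
  have hIoc : X ⁻¹' slab u v i =
      {ω | (X ω i : EReal) ≤ v i} \ {ω | (X ω i : EReal) ≤ u i} := by
    ext ω; simp [slab, and_comm]
  rw [hIoc, measureReal_sdiff hsub (measurableSet_le hXi measurable_const)]
  simp only [margCdf, measureReal_def]

lemma integrable_indicator_slab_comp (hX : Measurable X) (u v : Fin d → EReal) (i : Fin d) :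
    Integrable (fun ω => (slab u v i).indicator (1 : (Fin d → ℝ) → ℝ) (X ω)) P :=
  (integrable_const (1 : ℝ)).indicator (hX (measurableSet_slab u v i))

lemma integral_sum_indicator_slab (hX : Measurable X) {u v : Fin d → EReal}
    (huv : ∀ i, u i ≤ v i) :
    ∫ ω, ∑ i, (slab u v i).indicator 1 (X ω) ∂P =
      ∑ i, (margCdf P X i (v i) - margCdf P X i (u i)) := by
  rw [integral_finsetSum _ fun i _ => integrable_indicator_slab_comp P hX u v i]
  refine Finset.sum_congr rfl fun i _ => ?_
  rw [margCdf_sub_margCdf P hX i (huv i),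
    ← integral_indicator_one (hX (measurableSet_slab u v i))]
  rfl

end MarginalCdf

theorem stmt8_general {Ω : Type*} [MeasurableSpace Ω] {d : ℕ}
    (P : Measure Ω) [IsProbabilityMeasure P]
    (X : Ω → (Fin d → ℝ)) (hX : Measurable X)
    (u v : Fin d → EReal) (huv : ∀ i, u i ≤ v i)
    (g h : (Fin d → ℝ) → ℝ)
    (hgh : ∀ x, g x ≤ h x)
    (hlow : ∀ x, indLE u x ≤ g x) (hupp : ∀ x, h x ≤ indLE v x)
    (r : ℝ) (hr : 1 ≤ r) :
    (∫ ω, |h (X ω) - g (X ω)| ^ r ∂P) ^ (1 / r) ≤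
      (∑ i : Fin d, (margCdf P X i (v i) - margCdf P X i (u i))) ^ (1 / r) := by
  have hmoment : ∫ ω, |h (X ω) - g (X ω)| ^ r ∂P ≤
      ∑ i, (margCdf P X i (v i) - margCdf P X i (u i)) := by
    rw [← integral_sum_indicator_slab P hX huv]
    refine integral_mono_of_nonneg (ae_of_all _ fun ω => Real.rpow_nonneg (abs_nonneg _) r) ?_
      (ae_of_all _ fun ω => abs_sub_rpow_le_sum_indicator_slab hgh hlow hupp hr (X ω))
    exact integrable_finsetSum _ fun i _ => integrable_indicator_slab_comp P hX u v i
  exact Real.rpow_le_rpow (integral_nonneg fun ω => Real.rpow_nonneg (abs_nonneg _) r) hmoment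
    (by positivity)

/-- if `g ≤ h` are `[0,1]`-valued with
`1_{(-∞,u]} ≤ g` and `h ≤ 1_{(-∞,v]}`, then
`‖h(X) - g(X)‖_r ≤ (∑_i (F_i(v_i) - F_i(u_i)))^(1/r)`. -/
theorem stmt8 {Ω : Type*} [MeasurableSpace Ω] {d : ℕ}
    (P : Measure Ω) [IsProbabilityMeasure P]
    (X : Ω → (Fin d → ℝ)) (hX : Measurable X)
    (u v : Fin d → EReal) (huv : ∀ i, u i ≤ v i)
    (g h : (Fin d → ℝ) → ℝ) (hgm : Measurable g) (hhm : Measurable h)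
    (hg01 : ∀ x, 0 ≤ g x ∧ g x ≤ 1) (hh01 : ∀ x, 0 ≤ h x ∧ h x ≤ 1)
    (hgh : ∀ x, g x ≤ h x)
    (hlow : ∀ x, indLE u x ≤ g x) (hupp : ∀ x, h x ≤ indLE v x)
    (r : ℝ) (hr : 1 ≤ r) :
    (∫ ω, |h (X ω) - g (X ω)| ^ r ∂P) ^ (1 / r) ≤
      (∑ i : Fin d, (margCdf P X i (v i) - margCdf P X i (u i))) ^ (1 / r) :=
  stmt8_general P X hX u v huv g h hgh hlow hupp r hr

end
end

section
/- Let (X_i)_{i≥0} be a stationary ℝ^d-valued process that is (Θ,r)-multiple mixing with respect to a class G of measurable functions ℝ^d→ℝ with seminorm ‖·‖_G, and let p be a positive integer such that Σ_{i=0}^∞ i^{p−1} Θ(i) < ∞. Then for every q ∈ {1,…,p} there is a constant K' < ∞ such that for all n ≥ 1 and all f ∈ G with ‖f‖_∞ ≤ 1 and E f(X_0) = 0: J_n(p,q) ≤ K' ‖f(X_0)‖_r ‖f‖_G + n · I_n(q−1) · I_n(p−q). -/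
open MeasureTheory Filter Set

noncomputable section

/-- A process `X` is stationary if all shifted processes have the same law. -/
def Stationary {Ω E : Type*} [MeasurableSpace Ω] [MeasurableSpace E]
    (P : Measure Ω) (X : ℕ → Ω → E) : Prop :=
  ∀ k : ℕ, Measure.map (fun ω (i : ℕ) => X (i + k) ω) P =
    Measure.map (fun ω (i : ℕ) => X i ω) P

/-- The `L^r`-norm `(E |f(X₀)|^r)^(1/r)` of `f(X₀)`. -/
def rNorm {Ω : Type*} [MeasurableSpace Ω] {d : ℕ} (P : Measure Ω)
    (X : ℕ → Ω → (Fin d → ℝ)) (f : (Fin d → ℝ) → ℝ) (r : ℝ) : ℝ :=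
  (∫ ω, |f (X 0 ω)| ^ r ∂P) ^ (1 / r)

/-- The process `(X_i)` is `(Θ,r)`-multiple mixing with respect to the class `G`
equipped with the seminorm `nG`.  Here, for `i : Fin p → ℕ` encoding `i_1, …, i_p`,
the partial sum `i_j* = i_1 + ⋯ + i_j` appears as `∑ t ∈ Finset.Iic j, i t`, and
`q : Fin p` encodes the paper's `q ∈ {1, …, p}` (as `q + 1`). -/
def MultipleMixing {Ω : Type*} [MeasurableSpace Ω] {d : ℕ} (P : Measure Ω)
    (X : ℕ → Ω → (Fin d → ℝ)) (G : Set ((Fin d → ℝ) → ℝ))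
    (nG : ((Fin d → ℝ) → ℝ) → ℝ) (Θ : ℕ → ℝ) (r : ℝ) : Prop :=
  1 ≤ r ∧ (∀ i, 0 ≤ Θ i) ∧ (∀ i j : ℕ, i ≤ j → Θ j ≤ Θ i) ∧
  ∀ p : ℕ, 1 ≤ p → ∃ K : ℝ,
    ∀ f ∈ G, (∀ x, |f x| ≤ 1) → (∫ ω, f (X 0 ω) ∂P) = 0 →
      ∀ (i : Fin p → ℕ) (q : Fin p),
        |(∫ ω, (f (X 0 ω) * ∏ j ∈ Finset.Iio q, f (X (∑ t ∈ Finset.Iic j, i t) ω)) *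
              (∏ j ∈ Finset.Ici q, f (X (∑ t ∈ Finset.Iic j, i t) ω)) ∂P) -
          (∫ ω, f (X 0 ω) * ∏ j ∈ Finset.Iio q, f (X (∑ t ∈ Finset.Iic j, i t) ω) ∂P) *
          (∫ ω, ∏ j ∈ Finset.Ici q, f (X (∑ t ∈ Finset.Iic j, i t) ω) ∂P)|
        ≤ K * rNorm P X f r * nG f * Θ (i q)

/-- `I_n(p) = ∑_{0 ≤ i_1,…,i_p ≤ n-1, i_p* ≤ n-1} |E(f(X_0) f(X_{i_1*}) ⋯ f(X_{i_p*}))|`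
(for `p = 0` this is `|E f(X_0)|`, which is `0` for centered `f`). -/
def In {Ω : Type*} [MeasurableSpace Ω] {d : ℕ} (P : Measure Ω)
    (X : ℕ → Ω → (Fin d → ℝ)) (f : (Fin d → ℝ) → ℝ) (n p : ℕ) : ℝ :=
  ∑ i ∈ (Fintype.piFinset (fun _ : Fin p => Finset.range n)).filter
      (fun i => ∑ t, i t ≤ n - 1),
    |∫ ω, f (X 0 ω) * ∏ j : Fin p, f (X (∑ t ∈ Finset.Iic j, i t) ω) ∂P|

/-- `J_n(p,q)`: the part of `I_n(p)` where `i_q` is the largest increment; here `q : Fin p`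
encodes the paper's `q ∈ {1,…,p}` (as `q + 1`). -/
def Jn {Ω : Type*} [MeasurableSpace Ω] {d : ℕ} (P : Measure Ω)
    (X : ℕ → Ω → (Fin d → ℝ)) (f : (Fin d → ℝ) → ℝ) (n p : ℕ) (q : Fin p) : ℝ :=
  ∑ i ∈ (Fintype.piFinset (fun _ : Fin p => Finset.range n)).filter
      (fun i => (∀ t, i t ≤ i q) ∧ ∑ t, i t ≤ n - 1),
    |∫ ω, f (X 0 ω) * ∏ j : Fin p, f (X (∑ t ∈ Finset.Iic j, i t) ω) ∂P|

/-!
Fix an increment vector `(i_1, …, i_p)` whose largest entry is `i_q`, and split the moment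
`E(f(X_0) f(X_{i_1*}) ⋯ f(X_{i_p*}))` before the factor `f(X_{i_q*})`. The mixing bound controls it
by `K ‖f(X_0)‖_r ‖f‖_G Θ(i_q)` plus the product of the expectations of the two blocks. The first
block is a moment of order `q - 1`; after a time shift by `i_q*`, stationarity turns the second one
into a moment of order `p - q` with increments `i_{q+1}, …, i_p`.

Summing over the increment vectors: at most `(m + 1)^(p-1)` of them have maximal entry `i_q = m`,
so the `Θ`-terms add up to at most `∑ (m + 1)^(p-1) Θ(m) < ∞`. The products of moments are indexed
injectively by `(i_q, (i_1, …, i_{q-1}), (i_{q+1}, …, i_p))`, which gives `n I_n(q-1) I_n(p-q)`.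
-/

open Finset

lemma Stationary.integral_comp_shift {Ω E : Type*} [MeasurableSpace Ω] [MeasurableSpace E]
    {P : Measure Ω} {X : ℕ → Ω → E} (hstat : Stationary P X) (hX : ∀ i, Measurable (X i))
    {g : (ℕ → E) → ℝ} (hg : Measurable g) (k : ℕ) :
    ∫ ω, g (fun m => X (m + k) ω) ∂P = ∫ ω, g (fun m => X m ω) ∂P := by
  have hshift : Measurable fun ω (m : ℕ) => X (m + k) ω := measurable_pi_lambda _ fun m => hX _
  have hid : Measurable fun ω (m : ℕ) => X m ω := measurable_pi_lambda _ hX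
  rw [← integral_map hshift.aemeasurable hg.aestronglyMeasurable,
    ← integral_map hid.aemeasurable hg.aestronglyMeasurable, hstat k]

lemma Nat.sum_Iic_add_one_add {M : Type*} [AddCommMonoid M] (e : ℕ → M) (a k : ℕ) :
    ∑ t ∈ Finset.Iic (a + 1 + k), e t =
      ∑ t ∈ Finset.Iic a, e t + ∑ t ∈ Finset.Iic k, e (a + 1 + t) := by
  simp only [← Nat.range_succ_eq_Iic, show a + 1 + k + 1 = (a + 1) + (k + 1) by ring,
    Finset.sum_range_add]

lemma prod_Ico_eq_mul_prod_range {M : Type*} [CommMonoid M] (F : ℕ → M) {a b : ℕ} (hab : a < b) :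
    ∏ m ∈ Finset.Ico a b, F m = F a * ∏ k ∈ range (b - a - 1), F (a + 1 + k) := by
  rw [prod_eq_prod_Ico_succ_bot hab, prod_Ico_eq_prod_range, Nat.sub_sub]

lemma sum_comp_embedding_le {κ ι : Type*} [Fintype κ] [Fintype ι] (g : κ ↪ ι) (i : ι → ℕ) :
    ∑ u, i (g u) ≤ ∑ t, i t := by
  rw [← sum_map]
  exact sum_le_sum_of_subset (subset_univ _)

def tailAfter {α : Type*} {p : ℕ} (q : Fin p) (i : Fin p → α) : Fin (p - q - 1) → α :=
  fun u => i ⟨q + 1 + u, by omega⟩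

lemma prod_partialSum_eq_prod_map_val {M : Type*} [CommMonoid M] {p : ℕ} (F : ℕ → M)
    {i : Fin p → ℕ} {e : ℕ → ℕ} (he : ∀ t, i t = e t) (s : Finset (Fin p)) :
    ∏ j ∈ s, F (∑ t ∈ Finset.Iic j, i t) =
      ∏ m ∈ s.map Fin.valEmbedding, F (∑ t ∈ Finset.Iic m, e t) := by
  rw [Finset.prod_map]
  refine prod_congr rfl fun j _ => congrArg F ?_
  rw [Fin.valEmbedding_apply, ← Fin.map_valEmbedding_Iic, Finset.sum_map]
  exact sum_congr rfl fun t _ => he t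

def increments (n p : ℕ) : Finset (Fin p → ℕ) :=
  (Fintype.piFinset fun _ : Fin p => range n).filter fun i => ∑ t, i t ≤ n - 1

section Increments

variable {n p : ℕ} {i : Fin p → ℕ}

lemma take_mem_increments {m : ℕ} (h : m ≤ p) (hi : i ∈ increments n p) :
    Fin.take m h i ∈ increments n m := by
  simp only [increments, mem_filter, Fintype.mem_piFinset] at hi ⊢
  exact ⟨fun u => hi.1 _, (sum_comp_embedding_le (Fin.castLEEmb h) i).trans hi.2⟩

lemma tailAfter_mem_increments (q : Fin p) (hi : i ∈ increments n p) :
    tailAfter q i ∈ increments n (p - q - 1) := by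
  let g : Fin (p - q - 1) ↪ Fin p :=
    ⟨fun u => ⟨q + 1 + u, by omega⟩, fun u v huv => by simpa [Fin.ext_iff] using huv⟩
  simp only [increments, mem_filter, Fintype.mem_piFinset] at hi ⊢
  exact ⟨fun u => hi.1 _, (sum_comp_embedding_le g i).trans hi.2⟩

lemma eq_of_take_eq_of_tailAfter_eq {α : Type*} {q : Fin p} {i i' : Fin p → α}
    (hq : i q = i' q) (htake : Fin.take q q.2.le i = Fin.take q q.2.le i')
    (htail : tailAfter q i = tailAfter q i') : i = i' := by
  funext t
  rcases lt_trichotomy t q with htq | rfl | hqt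
  · exact congrFun htake ⟨t, htq⟩
  · exact hq
  · obtain ⟨u, hu⟩ : ∃ u : Fin (p - q - 1), (⟨q + 1 + u, by omega⟩ : Fin p) = t :=
      ⟨⟨t - q - 1, by omega⟩, Fin.ext (by simp only; omega)⟩
    exact hu ▸ congrFun htail u

end Increments

lemma card_filter_apply_eq_le_pow {p : ℕ} (q : Fin p) {T : Finset (Fin p → ℕ)}
    (hT : ∀ i ∈ T, ∀ t, i t ≤ i q) (m : ℕ) :
    #{i ∈ T | i q = m} ≤ (m + 1) ^ (p - 1) := by
  have hmaps : Set.MapsTo (fun (i : Fin p → ℕ) (t : {t // t ≠ q}) => i t)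
      ↑(T.filter fun i => i q = m) ↑(Fintype.piFinset fun _ : {t // t ≠ q} => range (m + 1)) := by
    intro i hi
    rw [mem_coe, mem_filter] at hi
    rw [mem_coe, Fintype.mem_piFinset]
    exact fun t => mem_range_succ_iff.2 (hi.2 ▸ hT i hi.1 t)
  have hinj : Set.InjOn (fun (i : Fin p → ℕ) (t : {t // t ≠ q}) => i t)
      ↑(T.filter fun i => i q = m) := by
    intro i hi i' hi' heq
    rw [mem_coe, mem_filter] at hi hi'
    funext t
    by_cases ht : t = q
    · rw [ht, hi.2, hi'.2]
    · exact congrFun heq ⟨t, ht⟩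
  refine (card_le_card_of_injOn _ hmaps hinj).trans_eq ?_
  simp [Fintype.card_subtype_compl]

lemma sum_apply_le_sum_range_add_one_pow_mul {Θ : ℕ → ℝ} (hΘ0 : ∀ m, 0 ≤ Θ m) {p n : ℕ}
    (q : Fin p) {T : Finset (Fin p → ℕ)} (hT : ∀ i ∈ T, i q < n ∧ ∀ t, i t ≤ i q) :
    ∑ i ∈ T, Θ (i q) ≤ ∑ m ∈ range n, ((m : ℝ) + 1) ^ (p - 1) * Θ m := by
  rw [← sum_fiberwise_of_maps_to (g := fun i => i q) (t := range n)
    fun i hi => mem_range.2 (hT i hi).1]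
  refine sum_le_sum fun m _ => ?_
  rw [sum_congr rfl fun i hi => congrArg Θ (mem_filter.1 hi).2, sum_const, nsmul_eq_mul]
  gcongr
  · exact hΘ0 m
  · exact_mod_cast card_filter_apply_eq_le_pow q (fun i hi => (hT i hi).2) m

lemma summable_add_one_pow_mul {Θ : ℕ → ℝ} (hΘ0 : ∀ m, 0 ≤ Θ m) {k : ℕ}
    (hΘ : Summable fun m : ℕ => (m : ℝ) ^ k * Θ m) :
    Summable fun m : ℕ => ((m : ℝ) + 1) ^ k * Θ m := by
  rw [← summable_nat_add_iff 1]
  refine Summable.of_nonneg_of_le (fun m => mul_nonneg (by positivity) (hΘ0 _)) (fun m => ?_)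
    (((summable_nat_add_iff 1).2 hΘ).mul_left (2 ^ k))
  rw [← mul_assoc, ← mul_pow]
  gcongr
  · exact hΘ0 _
  · push_cast; linarith

lemma sum_mul_le_mul_tsum {ι : Type*} {Θ : ℕ → ℝ} (hΘ0 : ∀ m, 0 ≤ Θ m) (hΘmono : Antitone Θ)
    {k n : ℕ} (hΘ : Summable fun m : ℕ => (m : ℝ) ^ k * Θ m) {c : ℝ} (hc : 0 ≤ c * Θ 0)
    {T : Finset ι} {g : ι → ℕ}
    (hT : ∑ i ∈ T, Θ (g i) ≤ ∑ m ∈ range n, ((m : ℝ) + 1) ^ k * Θ m) :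
    ∑ i ∈ T, c * Θ (g i) ≤ c * ∑' m : ℕ, ((m : ℝ) + 1) ^ k * Θ m := by
  rw [← mul_sum]
  rcases le_or_gt 0 c with hc0 | hc0
  · refine mul_le_mul_of_nonneg_left (hT.trans ?_) hc0
    exact (summable_add_one_pow_mul hΘ0 hΘ).sum_le_tsum _ fun m _ =>
      mul_nonneg (by positivity) (hΘ0 m)
  · have hΘzero : Θ = 0 := funext fun m =>
      le_antisymm ((hΘmono m.zero_le).trans (nonpos_of_mul_nonneg_right hc hc0)) (hΘ0 m)
    simp [hΘzero]

section Moments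

variable {Ω E : Type*} [MeasurableSpace Ω] {P : Measure Ω} {X : ℕ → Ω → E} {f : E → ℝ}

def moment (P : Measure Ω) (X : ℕ → Ω → E) (f : E → ℝ) {k : ℕ} (i : Fin k → ℕ) : ℝ :=
  ∫ ω, f (X 0 ω) * ∏ j : Fin k, f (X (∑ t ∈ Finset.Iic j, i t) ω) ∂P

variable {p : ℕ}

lemma moment_eq_integral_prod_Iio_mul_prod_Ici (q : Fin p) (i : Fin p → ℕ) :
    moment P X f i =
      ∫ ω, (f (X 0 ω) * ∏ j ∈ Finset.Iio q, f (X (∑ t ∈ Finset.Iic j, i t) ω)) *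
        ∏ j ∈ Finset.Ici q, f (X (∑ t ∈ Finset.Iic j, i t) ω) ∂P := by
  have he (t : Fin p) := (Fin.val_injective.extend_apply i 0 t).symm
  rw [moment]
  congr 1 with ω
  rw [mul_assoc]
  simp only [prod_partialSum_eq_prod_map_val (fun m => f (X m ω)) he, Fin.map_valEmbedding_univ,
    Fin.map_valEmbedding_Iio, Fin.map_valEmbedding_Ici, Nat.Iio_eq_range]
  rw [prod_range_mul_prod_Ico _ q.2.le]

lemma integral_mul_prod_Iio_eq_moment_take (q : Fin p) (i : Fin p → ℕ) :
    ∫ ω, f (X 0 ω) * ∏ j ∈ Finset.Iio q, f (X (∑ t ∈ Finset.Iic j, i t) ω) ∂P =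
      moment P X f (Fin.take q q.2.le i) := by
  have he (t : Fin p) := (Fin.val_injective.extend_apply i 0 t).symm
  have he' (u : Fin q) : Fin.take q q.2.le i u = Function.extend Fin.val i 0 u :=
    he (Fin.castLE q.2.le u)
  rw [moment]
  congr 1 with ω
  rw [prod_partialSum_eq_prod_map_val (fun m => f (X m ω)) he,
    prod_partialSum_eq_prod_map_val (fun m => f (X m ω)) he', Fin.map_valEmbedding_univ,
    Fin.map_valEmbedding_Iio]

lemma integral_prod_Ici_eq_moment_tailAfter [MeasurableSpace E] (hstat : Stationary P X)
    (hX : ∀ i, Measurable (X i)) (hf : Measurable f) (q : Fin p) (i : Fin p → ℕ) :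
    ∫ ω, ∏ j ∈ Finset.Ici q, f (X (∑ t ∈ Finset.Iic j, i t) ω) ∂P =
      moment P X f (tailAfter q i) := by
  set e := Function.extend Fin.val i 0
  have he (t : Fin p) : i t = e t := (Fin.val_injective.extend_apply i 0 t).symm
  have he' (u : Fin (p - q - 1)) : tailAfter q i u = e (q + 1 + u) := he _
  set s := ∑ t ∈ Finset.Iic (q : ℕ), e t with hs
  let g : (ℕ → E) → ℝ := fun y =>
    f (y 0) * ∏ k ∈ Finset.range (p - q - 1), f (y (∑ t ∈ Finset.Iic k, e (q + 1 + t)))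
  have hg : Measurable g := by fun_prop
  calc ∫ ω, ∏ j ∈ Finset.Ici q, f (X (∑ t ∈ Finset.Iic j, i t) ω) ∂P
      = ∫ ω, g (fun m => X (m + s) ω) ∂P := by
        congr 1 with ω
        rw [prod_partialSum_eq_prod_map_val (fun m => f (X m ω)) he, Fin.map_valEmbedding_Ici,
          prod_Ico_eq_mul_prod_range _ q.2]
        simp only [g, Nat.sum_Iic_add_one_add, ← hs, zero_add, add_comm s]
    _ = ∫ ω, g (fun m => X m ω) ∂P := hstat.integral_comp_shift hX hg s
    _ = moment P X f (tailAfter q i) := by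
        rw [moment]
        congr 1 with ω
        rw [prod_partialSum_eq_prod_map_val (fun m => f (X m ω)) (e := fun t => e (q + 1 + t)) he',
          Fin.map_valEmbedding_univ, Nat.Iio_eq_range]

lemma abs_moment_le_of_abs_cov_le [MeasurableSpace E] (hstat : Stationary P X)
    (hX : ∀ i, Measurable (X i)) (hf : Measurable f) (q : Fin p) (i : Fin p → ℕ) {c : ℝ}
    (hcov : |(∫ ω, (f (X 0 ω) * ∏ j ∈ Finset.Iio q, f (X (∑ t ∈ Finset.Iic j, i t) ω)) *
              (∏ j ∈ Finset.Ici q, f (X (∑ t ∈ Finset.Iic j, i t) ω)) ∂P) -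
          (∫ ω, f (X 0 ω) * ∏ j ∈ Finset.Iio q, f (X (∑ t ∈ Finset.Iic j, i t) ω) ∂P) *
          (∫ ω, ∏ j ∈ Finset.Ici q, f (X (∑ t ∈ Finset.Iic j, i t) ω) ∂P)| ≤ c) :
    |moment P X f i| ≤
      c + |moment P X f (Fin.take q q.2.le i)| * |moment P X f (tailAfter q i)| := by
  rw [moment_eq_integral_prod_Iio_mul_prod_Ici q, ← abs_mul,
    ← integral_mul_prod_Iio_eq_moment_take q, ← integral_prod_Ici_eq_moment_tailAfter hstat hX hf q]
  exact sub_le_iff_le_add.1 ((abs_sub_abs_le_abs_sub _ _).trans hcov)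

end Moments

lemma In_eq_sum_increments {Ω : Type*} [MeasurableSpace Ω] {d : ℕ} (P : Measure Ω)
    (X : ℕ → Ω → (Fin d → ℝ)) (f : (Fin d → ℝ) → ℝ) (n p : ℕ) :
    In P X f n p = ∑ i ∈ increments n p, |moment P X f i| := rfl

lemma Jn_eq_sum_filter_increments {Ω : Type*} [MeasurableSpace Ω] {d : ℕ} (P : Measure Ω)
    (X : ℕ → Ω → (Fin d → ℝ)) (f : (Fin d → ℝ) → ℝ) (n p : ℕ) (q : Fin p) :
    Jn P X f n p q = ∑ i ∈ increments n p with ∀ t, i t ≤ i q, |moment P X f i| := by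
  rw [Jn, increments, filter_filter]
  simp only [and_comm]
  rfl

lemma sum_abs_moment_take_mul_tailAfter_le {Ω : Type*} [MeasurableSpace Ω] {d : ℕ}
    (P : Measure Ω) (X : ℕ → Ω → (Fin d → ℝ)) (f : (Fin d → ℝ) → ℝ) (n : ℕ) {p : ℕ} (q : Fin p) :
    ∑ i ∈ increments n p,
        |moment P X f (Fin.take q q.2.le i)| * |moment P X f (tailAfter q i)| ≤
      n * In P X f n q * In P X f n (p - q - 1) := by
  let ψ (i : Fin p → ℕ) := (i q, Fin.take q q.2.le i, tailAfter q i)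
  let w (x : ℕ × (Fin q → ℕ) × (Fin (p - q - 1) → ℕ)) :=
    |moment P X f x.2.1| * |moment P X f x.2.2|
  have hinj : Set.InjOn ψ ↑(increments n p) := fun i _ i' _ h => by
    simp only [ψ, Prod.mk.injEq] at h
    exact eq_of_take_eq_of_tailAfter_eq h.1 h.2.1 h.2.2
  have hsub :
      (increments n p).image ψ ⊆ range n ×ˢ increments n q ×ˢ increments n (p - q - 1) := by
    intro x hx
    obtain ⟨i, hi, rfl⟩ := mem_image.1 hx
    refine mem_product.2 ⟨?_,
      mem_product.2 ⟨take_mem_increments q.2.le hi, tailAfter_mem_increments q hi⟩⟩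
    simp only [increments, mem_filter, Fintype.mem_piFinset] at hi
    exact hi.1 q
  calc ∑ i ∈ increments n p, w (ψ i)
      = ∑ x ∈ (increments n p).image ψ, w x := (sum_image hinj).symm
    _ ≤ ∑ x ∈ range n ×ˢ increments n q ×ˢ increments n (p - q - 1), w x :=
        sum_le_sum_of_subset_of_nonneg hsub fun _ _ _ => by positivity
    _ = n * In P X f n q * In P X f n (p - q - 1) := by
        simp only [sum_product, w, In_eq_sum_increments, sum_mul_sum, sum_const, card_range,
          nsmul_eq_mul, mul_assoc]

theorem stmt9_general {Ω : Type*} [MeasurableSpace Ω] {d : ℕ}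
    (P : Measure Ω)
    (X : ℕ → Ω → (Fin d → ℝ)) (hXmeas : ∀ i, Measurable (X i))
    (hstat : Stationary P X)
    (G : Set ((Fin d → ℝ) → ℝ)) (hGmeas : ∀ f ∈ G, Measurable f)
    (nG : ((Fin d → ℝ) → ℝ) → ℝ)
    (Θ : ℕ → ℝ) (r : ℝ)
    (hmix : MultipleMixing P X G nG Θ r)
    (p : ℕ) (hp : 1 ≤ p)
    (hΘ : Summable (fun i : ℕ => (i : ℝ) ^ (p - 1) * Θ i)) :
    ∀ q : Fin p, ∃ K' : ℝ,
      ∀ n : ℕ, 1 ≤ n → ∀ f ∈ G, (∀ x, |f x| ≤ 1) → (∫ ω, f (X 0 ω) ∂P) = 0 →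
        Jn P X f n p q ≤ K' * rNorm P X f r * nG f +
          (n : ℝ) * In P X f n (q : ℕ) * In P X f n (p - (q : ℕ) - 1) := by
  intro q
  obtain ⟨-, hΘ0, hΘmono, hmixp⟩ := hmix
  obtain ⟨K, hK⟩ := hmixp p hp
  refine ⟨K * ∑' m : ℕ, ((m : ℝ) + 1) ^ (p - 1) * Θ m, fun n _ f hf hf1 hf0 => ?_⟩
  set c := K * rNorm P X f r * nG f
  have hmom (i : Fin p → ℕ) := abs_moment_le_of_abs_cov_le hstat hXmeas (hGmeas f hf) q i
    (hK f hf hf1 hf0 i q)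
  have hc : 0 ≤ c * Θ 0 := (abs_nonneg _).trans (hK f hf hf1 hf0 (fun _ => 0) q)
  set J := (increments n p).filter fun i => ∀ t, i t ≤ i q
  have hJ : ∀ i ∈ J, i q < n ∧ ∀ t, i t ≤ i q := by
    intro i hi
    simp only [J, increments, mem_filter, Fintype.mem_piFinset, Finset.mem_range] at hi
    exact ⟨hi.1.1 q, hi.2⟩
  rw [Jn_eq_sum_filter_increments]
  calc _ ≤ ∑ i ∈ J, (c * Θ (i q) +
          |moment P X f (Fin.take q q.2.le i)| * |moment P X f (tailAfter q i)|) :=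
        sum_le_sum fun i _ => hmom i
    _ ≤ c * ∑' m : ℕ, ((m : ℝ) + 1) ^ (p - 1) * Θ m +
          n * In P X f n q * In P X f n (p - q - 1) := by
        rw [sum_add_distrib]
        gcongr
        · exact sum_mul_le_mul_tsum hΘ0 hΘmono hΘ hc
            (sum_apply_le_sum_range_add_one_pow_mul hΘ0 q hJ)
        · refine (sum_le_sum_of_subset_of_nonneg (filter_subset _ _)
            fun _ _ _ => by positivity).trans ?_
          exact sum_abs_moment_take_mul_tailAfter_le P X f n q
    _ = _ := by ring

/-- Lemma 5 of the paper: under `(Θ,r)`-multiple mixing and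
`∑ i^(p-1) Θ(i) < ∞`, one has `J_n(p,q) ≤ K' ‖f(X₀)‖_r ‖f‖_G + n I_n(q-1) I_n(p-q)`. -/
theorem stmt9 {Ω : Type*} [MeasurableSpace Ω] {d : ℕ}
    (P : Measure Ω) [IsProbabilityMeasure P]
    (X : ℕ → Ω → (Fin d → ℝ)) (hXmeas : ∀ i, Measurable (X i))
    (hstat : Stationary P X)
    (G : Set ((Fin d → ℝ) → ℝ)) (hGmeas : ∀ f ∈ G, Measurable f)
    (nG : ((Fin d → ℝ) → ℝ) → ℝ)
    (Θ : ℕ → ℝ) (r : ℝ)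
    (hmix : MultipleMixing P X G nG Θ r)
    (p : ℕ) (hp : 1 ≤ p)
    (hΘ : Summable (fun i : ℕ => (i : ℝ) ^ (p - 1) * Θ i)) :
    ∀ q : Fin p, ∃ K' : ℝ,
      ∀ n : ℕ, 1 ≤ n → ∀ f ∈ G, (∀ x, |f x| ≤ 1) → (∫ ω, f (X 0 ω) ∂P) = 0 →
        Jn P X f n p q ≤ K' * rNorm P X f r * nG f +
          (n : ℝ) * In P X f n (q : ℕ) * In P X f n (p - (q : ℕ) - 1) :=
  stmt9_general P X hXmeas hstat G hGmeas nG Θ r hmix p hp hΘ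

end
end

section
/- Let (X_i)_{i≥0} be a stationary ℝ^d-valued process, let f:ℝ^d→ℝ be bounded and measurable with E f(X_0) = 0, and let p ≥ 1 and n ≥ 1 be integers. Then | E( ( Σ_{i=1}^n f(X_i) )^p ) | ≤ p! · n · I_n(p−1). -/
open MeasureTheory Filter Set

noncomputable section

lemma telesc {q : ℕ} (h : Fin (q+1) → ℕ) (hm : Monotone h) (j : Fin q) :
    ∑ t ∈ Finset.Iic j, (h t.succ - h t.castSucc) = h j.succ - h 0 := by
  obtain ⟨jv, hjv⟩ := j
  induction jv with
  | zero =>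
      have h0 : Finset.Iic (⟨0, hjv⟩ : Fin q) = {⟨0, hjv⟩} := by
        ext t; simp [Fin.le_def, Nat.le_zero, Fin.ext_iff]
      simp [h0]
  | succ m ih =>
      have hm' : m < q := Nat.lt_of_succ_lt hjv
      have hins : Finset.Iic (⟨m+1, hjv⟩ : Fin q)
          = insert ⟨m+1, hjv⟩ (Finset.Iic ⟨m, hm'⟩) := by
        ext t; simp only [Finset.mem_Iic, Finset.mem_insert, Fin.le_def, Fin.ext_iff]; omega
      rw [hins, Finset.sum_insert (by simp [Fin.le_def]), ih hm']
      have heq : (⟨m, hm'⟩ : Fin q).succ = (⟨m+1, hjv⟩ : Fin q).castSucc := by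
        simp [Fin.ext_iff]
      have h1 : h 0 ≤ h (⟨m+1, hjv⟩ : Fin q).castSucc := hm (Fin.zero_le _)
      have h2 : h (⟨m+1, hjv⟩ : Fin q).castSucc ≤ h (⟨m+1, hjv⟩ : Fin q).succ :=
        hm (Fin.castSucc_le_succ _)
      rw [heq]
      omega

lemma telesc_univ {q : ℕ} (h : Fin (q+1) → ℕ) (hm : Monotone h) :
    ∑ t : Fin q, (h t.succ - h t.castSucc) = h (Fin.last q) - h 0 := by
  cases q with
  | zero => simp [Fin.last]
  | succ q' =>
      have huniv : (Finset.univ : Finset (Fin (q'+1))) = Finset.Iic (Fin.last q') := by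
        ext t; simp [Fin.le_last]
      rw [huniv, telesc h hm (Fin.last q'), Fin.succ_last]

lemma recover {q : ℕ} (h : Fin (q+1) → ℕ) (hm : Monotone h) (j : Fin q) :
    h j.succ = h 0 + ∑ t ∈ Finset.Iic j, (h t.succ - h t.castSucc) := by
  have h1 := telesc h hm j
  have h2 := hm (Fin.zero_le j.succ)
  omega


lemma sum_comp_le {α β : Type*} [DecidableEq β] (s : Finset α) (g : α → β) (F : β → ℝ)
    (hF : ∀ b, 0 ≤ F b) (t : Finset β) (hst : ∀ a ∈ s, g a ∈ t) (c : ℕ)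
    (hc : ∀ b ∈ t, (s.filter fun a => g a = b).card ≤ c) :
    ∑ a ∈ s, F (g a) ≤ (c : ℝ) * ∑ b ∈ t, F b := by
  calc ∑ a ∈ s, F (g a) = ∑ b ∈ t, ∑ a ∈ s.filter (fun a => g a = b), F (g a) :=
        (Finset.sum_fiberwise_of_maps_to hst _).symm
    _ ≤ ∑ b ∈ t, (c : ℝ) * F b := by
        refine Finset.sum_le_sum fun b hb => ?_
        calc ∑ a ∈ s.filter (fun a => g a = b), F (g a)
            = ∑ _a ∈ s.filter (fun a => g a = b), F b :=
              Finset.sum_congr rfl fun a ha => by rw [(Finset.mem_filter.mp ha).2]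
          _ = ((s.filter (fun a => g a = b)).card : ℝ) * F b := by
              rw [Finset.sum_const, nsmul_eq_mul]
          _ ≤ (c : ℝ) * F b :=
              mul_le_mul_of_nonneg_right (by exact_mod_cast hc b hb) (hF b)
    _ = (c : ℝ) * ∑ b ∈ t, F b := by rw [Finset.mul_sum]


/-- inequality (24) of the paper: for a stationary process and a
bounded measurable centered `f`, `|E (∑_{i=1}^n f(X_i))^p| ≤ p! · n · I_n(p-1)`. -/
theorem stmt11 {Ω : Type*} [MeasurableSpace Ω] {d : ℕ}
    (P : Measure Ω) [IsProbabilityMeasure P]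
    (X : ℕ → Ω → (Fin d → ℝ)) (hXmeas : ∀ i, Measurable (X i))
    (hstat : Stationary P X)
    (f : (Fin d → ℝ) → ℝ) (hfmeas : Measurable f)
    (hfb : ∃ M : ℝ, ∀ x, |f x| ≤ M)
    (hf0 : (∫ ω, f (X 0 ω) ∂P) = 0)
    (p : ℕ) (hp : 1 ≤ p) (n : ℕ) (hn : 1 ≤ n) :
    |∫ ω, (∑ i ∈ Finset.Icc 1 n, f (X i ω)) ^ p ∂P| ≤
      (Nat.factorial p : ℝ) * (n : ℝ) * In P X f n (p - 1) := by
  classical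
  obtain ⟨q, rfl⟩ : ∃ q, p = q + 1 := ⟨p - 1, (Nat.succ_pred_eq_of_pos hp).symm⟩
  obtain ⟨M, hM⟩ := hfb
  -- basic measurability/integrability facts
  have hmeasP : ∀ {r : ℕ} (m : Fin r → ℕ), Measurable (fun ω => ∏ k, f (X (m k) ω)) := by
    intro r m
    exact Finset.measurable_prod _ (fun k _ => hfmeas.comp (hXmeas (m k)))
  have hint : ∀ {r : ℕ} (m : Fin r → ℕ), Integrable (fun ω => ∏ k, f (X (m k) ω)) P := by
    intro r m
    refine (integrable_const (M ^ r)).mono' (hmeasP m).aestronglyMeasurable ?_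
    filter_upwards with ω
    rw [Real.norm_eq_abs, Finset.abs_prod]
    calc ∏ k, |f (X (m k) ω)| ≤ ∏ _k : Fin r, M :=
          Finset.prod_le_prod (fun _ _ => abs_nonneg _) (fun k _ => hM _)
      _ = M ^ r := by simp
  set T : Finset (Fin (q+1) → ℕ) := Fintype.piFinset fun _ => Finset.Icc 1 n with hT
  set A : (Fin (q+1) → ℕ) → ℝ := fun h => |∫ ω, ∏ k, f (X (h k) ω) ∂P| with hA
  have hA0 : ∀ h, 0 ≤ A h := fun h => abs_nonneg _
  -- Step A: expansion of the power
  have h1 : ∫ ω, (∑ i ∈ Finset.Icc 1 n, f (X i ω)) ^ (q+1) ∂P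
      = ∑ g ∈ T, ∫ ω, ∏ k, f (X (g k) ω) ∂P := by
    have expand : ∀ ω, (∑ i ∈ Finset.Icc 1 n, f (X i ω)) ^ (q+1)
        = ∑ g ∈ T, ∏ k, f (X (g k) ω) := by
      intro ω
      calc (∑ i ∈ Finset.Icc 1 n, f (X i ω)) ^ (q+1)
          = ∏ _k : Fin (q+1), ∑ i ∈ Finset.Icc 1 n, f (X i ω) := by
            rw [Finset.prod_const, Finset.card_univ, Fintype.card_fin]
        _ = ∑ g ∈ T, ∏ k, f (X (g k) ω) := Finset.prod_univ_sum _ _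
    simp_rw [expand]
    exact integral_finset_sum _ (fun g _ => hint g)
  -- sorting invariance
  have hsortA : ∀ g : Fin (q+1) → ℕ, A g = A (g ∘ Tuple.sort g) := by
    intro g
    have hfe : (fun ω => ∏ k, f (X ((g ∘ Tuple.sort g) k) ω))
        = fun ω => ∏ k, f (X (g k) ω) := by
      funext ω
      exact Equiv.prod_comp (Tuple.sort g) (fun k => f (X (g k) ω))
    simp only [hA]
    rw [hfe]
  set Mset : Finset (Fin (q+1) → ℕ) := T.filter (fun h => Monotone h) with hMset
  -- Step D: sorting bound
  have h2 : ∑ g ∈ T, A g ≤ (Nat.factorial (q+1) : ℝ) * ∑ h ∈ Mset, A h := by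
    have e : ∑ g ∈ T, A g = ∑ g ∈ T, A (g ∘ Tuple.sort g) :=
      Finset.sum_congr rfl (fun g _ => hsortA g)
    rw [e]
    refine sum_comp_le T (fun g => g ∘ Tuple.sort g) A hA0 Mset ?_ _ ?_
    · intro g hg
      refine Finset.mem_filter.mpr ⟨?_, Tuple.monotone_sort g⟩
      rw [hT, Fintype.mem_piFinset] at hg ⊢
      exact fun k => hg _
    · intro h _
      calc (T.filter (fun g => g ∘ Tuple.sort g = h)).card
          ≤ (Finset.univ : Finset (Equiv.Perm (Fin (q+1)))).card := by
            apply Finset.card_le_card_of_injOn (fun g => Tuple.sort g)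
              (fun _ _ => Finset.mem_univ _)
            intro g1 hg1 g2 hg2 hsort
            have e1 : g1 ∘ Tuple.sort g1 = h := (Finset.mem_filter.mp hg1).2
            have e2 : g2 ∘ Tuple.sort g2 = h := (Finset.mem_filter.mp hg2).2
            have r1 : g1 = h ∘ ((Tuple.sort g1)⁻¹ : Equiv.Perm (Fin (q+1))) := by
              funext j
              have := congrFun e1 ((Tuple.sort g1)⁻¹ j)
              simpa using this
            have r2 : g2 = h ∘ ((Tuple.sort g2)⁻¹ : Equiv.Perm (Fin (q+1))) := by
              funext j
              have := congrFun e2 ((Tuple.sort g2)⁻¹ j)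
              simpa using this
            rw [r1, r2, show Tuple.sort g1 = Tuple.sort g2 from hsort]
        _ = Nat.factorial (q+1) := by
            simp [Fintype.card_perm]
  -- Step E: stationarity, A h = B (gaps of h) for monotone h
  set B : (Fin q → ℕ) → ℝ := fun i =>
    |∫ ω, f (X 0 ω) * ∏ j : Fin q, f (X (∑ t ∈ Finset.Iic j, i t) ω) ∂P| with hB
  have hB0 : ∀ i, 0 ≤ B i := fun _ => abs_nonneg _
  have key : ∀ h ∈ Mset, A h = B (fun t => h t.succ - h t.castSucc) := by
    intro h hh
    obtain ⟨hhT, hmono⟩ := Finset.mem_filter.mp hh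
    have hshift : ∫ ω, ∏ k, f (X (h k) ω) ∂P = ∫ ω, ∏ k, f (X (h k - h 0) ω) ∂P := by
      have hΦ : Measurable fun (Y : ℕ → (Fin d → ℝ)) =>
          ∏ k : Fin (q+1), f (Y (h k - h 0)) :=
        Finset.measurable_prod _ fun k _ => hfmeas.comp (measurable_pi_apply _)
      have hs1 : Measurable fun ω => (fun i : ℕ => X (i + h 0) ω) :=
        measurable_pi_lambda _ fun i => hXmeas _
      have hs2 : Measurable fun ω => (fun i : ℕ => X i ω) :=
        measurable_pi_lambda _ fun i => hXmeas _
      have e1 := MeasureTheory.integral_map (μ := P) hs1.aemeasurable hΦ.aestronglyMeasurable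
      have e2 := MeasureTheory.integral_map (μ := P) hs2.aemeasurable hΦ.aestronglyMeasurable
      rw [hstat (h 0)] at e1
      have e3 := e2.symm.trans e1
      have hk : ∀ k : Fin (q+1), (h k - h 0) + h 0 = h k :=
        fun k => Nat.sub_add_cancel (hmono (Fin.zero_le k))
      simp only [hk] at e3
      exact e3.symm
    have hsplit : (fun ω => ∏ k : Fin (q+1), f (X (h k - h 0) ω))
        = fun ω => f (X 0 ω) *
            ∏ j : Fin q, f (X (∑ t ∈ Finset.Iic j, (h t.succ - h t.castSucc)) ω) := by
      funext ω
      rw [Fin.prod_univ_succ]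
      congr 1
      · rw [Nat.sub_self]
      · exact Finset.prod_congr rfl fun j _ => by rw [telesc h hmono j]
    simp only [hA, hB]
    rw [hshift, hsplit]
  -- Step G: summing over monotone tuples
  have h3 : ∑ h ∈ Mset, A h ≤ (n : ℝ) * In P X f n q := by
    have e : ∑ h ∈ Mset, A h
        = ∑ h ∈ Mset, B (fun t => h t.succ - h t.castSucc) :=
      Finset.sum_congr rfl key
    rw [e]
    refine sum_comp_le Mset (fun h => (fun t : Fin q => h t.succ - h t.castSucc)) B hB0
      ((Fintype.piFinset (fun _ : Fin q => Finset.range n)).filter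
        (fun i => ∑ t, i t ≤ n - 1)) ?_ n ?_
    · intro h hh
      obtain ⟨hhT, hmono⟩ := Finset.mem_filter.mp hh
      rw [hT, Fintype.mem_piFinset] at hhT
      have hrange : ∀ k, 1 ≤ h k ∧ h k ≤ n := fun k => Finset.mem_Icc.mp (hhT k)
      refine Finset.mem_filter.mpr ⟨Fintype.mem_piFinset.mpr fun t => ?_, ?_⟩
      · simp only [Finset.mem_range]
        have h1' := (hrange t.succ).2
        have h2' := (hrange t.castSucc).1
        omega
      · show ∑ t : Fin q, (h t.succ - h t.castSucc) ≤ n - 1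
        rw [telesc_univ h hmono]
        have h1' := (hrange (Fin.last q)).2
        have h2' := (hrange 0).1
        omega
    · intro i _
      calc (Mset.filter (fun h => (fun t : Fin q => h t.succ - h t.castSucc) = i)).card
          ≤ (Finset.Icc 1 n).card := by
            apply Finset.card_le_card_of_injOn (fun h => h 0)
            · intro h hh
              have hhT := (Finset.mem_filter.mp (Finset.mem_filter.mp hh).1).1
              rw [hT, Fintype.mem_piFinset] at hhT
              exact hhT 0
            · intro h1 hh1 h2 hh2 h0eq
              have h0eq' : h1 0 = h2 0 := h0eq
              have m1 := (Finset.mem_filter.mp (Finset.mem_filter.mp hh1).1).2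
              have m2 := (Finset.mem_filter.mp (Finset.mem_filter.mp hh2).1).2
              have g1 := (Finset.mem_filter.mp hh1).2
              have g2 := (Finset.mem_filter.mp hh2).2
              funext k
              refine Fin.cases h0eq' (fun j => ?_) k
              rw [recover h1 m1 j, recover h2 m2 j, h0eq']
              congr 1
              refine Finset.sum_congr rfl fun t _ => ?_
              have := congrFun (g1.trans g2.symm) t
              simpa using this
        _ = n := by simp
  -- final assembly
  have hq : (q + 1) - 1 = q := by omega
  rw [hq, h1]
  calc |∑ g ∈ T, ∫ ω, ∏ k, f (X (g k) ω) ∂P| ≤ ∑ g ∈ T, A g :=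
        Finset.abs_sum_le_sum_abs _ _
    _ ≤ (Nat.factorial (q+1) : ℝ) * ∑ h ∈ Mset, A h := h2
    _ ≤ (Nat.factorial (q+1) : ℝ) * ((n : ℝ) * In P X f n q) :=
        mul_le_mul_of_nonneg_left h3 (by positivity)
    _ = (Nat.factorial (q+1) : ℝ) * (n : ℝ) * In P X f n q := by ring

end
end

section
/- Let (X_i)_{i≥0} be an ℝ^d-valued causal function of an i.i.d. process (ξ_j)_{j∈ℤ}, let M_0 := σ(ξ_0, ξ_{−1}, ξ_{−2}, …), let α ∈ (0,1] and let f be a bounded α-Hölder function on ℝ^d with E f(X_0) = 0. Then for every i ≥ 1: E | f(X_0) · E( f(X_i) | M_0 ) | ≤ ‖f‖_{H_α}² (δ_{i,1})^α. -/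
/-!
Let `Ẋ_i` be `X_i` with the innovations `ξ_0, ξ_{-1}, …` replaced by the independent copies
`ξ'_0, ξ'_{-1}, …`. Then `Ẋ_i` is independent of `M_0` and has the law of `X_0`, so
`E(f(Ẋ_i) | M_0) = E f(X_0) = 0` and `E(f(X_i) | M_0) = E(f(X_i) - f(Ẋ_i) | M_0)`.
Bounding `|f(X_0)|` by `‖f‖_∞`, using that conditional expectation contracts `L¹`, and
`|f(X_i) - f(Ẋ_i)| ≤ [f]_α ‖X_i - Ẋ_i‖^α` together with Jensen's inequality
`E ‖X_i - Ẋ_i‖^α ≤ δ_{i,1}^α` gives the bound.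
-/

open MeasureTheory ProbabilityTheory Filter Set
open scoped ENNReal NNReal

noncomputable section

/-- The causal process `X_i = G((ξ_{i-j})_{j ∈ ℕ})`. -/
def causalX {Ω 𝓧 E : Type*} (G : (ℕ → 𝓧) → E) (ξ : ℤ → Ω → 𝓧)
    (i : ℕ) (ω : Ω) : E :=
  G (fun j => ξ ((i : ℤ) - (j : ℤ)) ω)

/-- The coupled process `Ẋ_i = G(ξ_i, …, ξ_1, ξ'_0, ξ'_{-1}, …)`. -/
def causalXdot {Ω 𝓧 E : Type*} (G : (ℕ → 𝓧) → E) (ξ ξ' : ℤ → Ω → 𝓧)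
    (i : ℕ) (ω : Ω) : E :=
  G (fun j => if (j : ℤ) < (i : ℤ) then ξ ((i : ℤ) - (j : ℤ)) ω
              else ξ' ((i : ℤ) - (j : ℤ)) ω)

/-- The physical dependence measure `δ_{i,s} = ‖X_i - Ẋ_i‖_s ∈ [0,∞]`. -/
def pdm {Ω 𝓧 : Type*} [MeasurableSpace Ω] {d : ℕ} (P : Measure Ω)
    (G : (ℕ → 𝓧) → (Fin d → ℝ)) (ξ ξ' : ℤ → Ω → 𝓧) (s : ℝ≥0∞) (i : ℕ) : ℝ≥0∞ :=
  eLpNorm (fun ω => causalX G ξ i ω - causalXdot G ξ ξ' i ω) s P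

/-- The sup-norm `‖f‖_∞ = sup_x |f x|` (as a supremum of reals). -/
def supNorm {d : ℕ} (f : (Fin d → ℝ) → ℝ) : ℝ :=
  sSup {c : ℝ | ∃ x : Fin d → ℝ, c = |f x|}

/-- The α-Hölder norm `‖f‖_{H_α}`. -/
def holderNorm {d : ℕ} (α : ℝ) (f : (Fin d → ℝ) → ℝ) : ℝ :=
  supNorm f + sSup {c : ℝ | ∃ x y : Fin d → ℝ, x ≠ y ∧ c = |f x - f y| / ‖x - y‖ ^ α}

/-- Membership in the class `H_α` of bounded α-Hölder functions. -/
def MemHolderCl {d : ℕ} (α : ℝ) (f : (Fin d → ℝ) → ℝ) : Prop :=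
  (∃ M : ℝ, ∀ x, |f x| ≤ M) ∧
  ∃ C : ℝ, ∀ x y : Fin d → ℝ, |f x - f y| ≤ C * ‖x - y‖ ^ α

def holderSeminorm {d : ℕ} (α : ℝ) (f : (Fin d → ℝ) → ℝ) : ℝ :=
  sSup {c : ℝ | ∃ x y : Fin d → ℝ, x ≠ y ∧ c = |f x - f y| / ‖x - y‖ ^ α}

lemma holderSeminorm_nonneg {d : ℕ} (α : ℝ) (f : (Fin d → ℝ) → ℝ) :
    0 ≤ holderSeminorm α f :=
  Real.sSup_nonneg (by rintro c ⟨x, y, -, rfl⟩; positivity)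

lemma supNorm_le_holderNorm {d : ℕ} (α : ℝ) (f : (Fin d → ℝ) → ℝ) : supNorm f ≤ holderNorm α f :=
  le_add_of_nonneg_right (holderSeminorm_nonneg α f)

namespace MemHolderCl

variable {d : ℕ} {α : ℝ} {f : (Fin d → ℝ) → ℝ}

lemma abs_le_supNorm (hf : MemHolderCl α f) (x : Fin d → ℝ) : |f x| ≤ supNorm f :=
  have ⟨M, hM⟩ := hf.1
  le_csSup ⟨M, by rintro c ⟨y, rfl⟩; exact hM y⟩ ⟨x, rfl⟩

lemma supNorm_nonneg (hf : MemHolderCl α f) : 0 ≤ supNorm f :=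
  (abs_nonneg _).trans (hf.abs_le_supNorm 0)

lemma holderSeminorm_le_holderNorm (hf : MemHolderCl α f) : holderSeminorm α f ≤ holderNorm α f :=
  le_add_of_nonneg_left hf.supNorm_nonneg

lemma abs_sub_le (hf : MemHolderCl α f) (x y : Fin d → ℝ) :
    |f x - f y| ≤ holderSeminorm α f * ‖x - y‖ ^ α := by
  rcases eq_or_ne x y with rfl | hxy
  · simpa using mul_nonneg (holderSeminorm_nonneg α f) (Real.rpow_nonneg le_rfl α)
  obtain ⟨C, hC⟩ := hf.2
  have hpos : 0 < ‖x - y‖ ^ α := Real.rpow_pos_of_pos (norm_pos_iff.mpr (sub_ne_zero.mpr hxy)) α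
  have hbdd : BddAbove {c : ℝ | ∃ x y : Fin d → ℝ, x ≠ y ∧ c = |f x - f y| / ‖x - y‖ ^ α} := by
    refine ⟨C, ?_⟩
    rintro c ⟨x', y', hxy', rfl⟩
    have h := Real.rpow_pos_of_pos (norm_pos_iff.mpr (sub_ne_zero.mpr hxy')) α
    exact (div_le_iff₀ h).mpr (hC x' y')
  rw [← div_le_iff₀ hpos]
  exact le_csSup hbdd ⟨x, y, hxy, rfl⟩

lemma holderWith (hf : MemHolderCl α f) (hα : 0 ≤ α) :
    HolderWith (holderSeminorm α f).toNNReal α.toNNReal f := by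
  intro x y
  rw [edist_dist, edist_dist, Real.dist_eq, dist_eq_norm, Real.coe_toNNReal α hα]
  calc ENNReal.ofReal |f x - f y| ≤ ENNReal.ofReal (holderSeminorm α f * ‖x - y‖ ^ α) :=
        ENNReal.ofReal_le_ofReal (hf.abs_sub_le x y)
    _ = ENNReal.ofReal (holderSeminorm α f) * ENNReal.ofReal ‖x - y‖ ^ α := by
        rw [ENNReal.ofReal_mul (holderSeminorm_nonneg α f),
          ENNReal.ofReal_rpow_of_nonneg (norm_nonneg _) hα]

lemma measurable (hf : MemHolderCl α f) (hα : 0 < α) : Measurable f :=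
  ((hf.holderWith hα.le).continuous (Real.toNNReal_pos.mpr hα)).measurable

end MemHolderCl

section Moments

variable {Ω : Type*} {m mΩ : MeasurableSpace Ω} {μ : Measure Ω}

lemma integral_abs_mul_condExp_le {Z : Ω → ℝ} {c : ℝ} (hc : 0 ≤ c) (hZ : ∀ᵐ ω ∂μ, |Z ω| ≤ c)
    (g : Ω → ℝ) : ∫ ω, |Z ω * μ[g | m] ω| ∂μ ≤ c * ∫ ω, |g ω| ∂μ :=
  calc ∫ ω, |Z ω * μ[g | m] ω| ∂μ ≤ ∫ ω, c * |μ[g | m] ω| ∂μ := by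
        refine integral_mono_of_nonneg (ae_of_all _ fun ω => abs_nonneg _)
          (integrable_condExp.abs.const_mul c) ?_
        filter_upwards [hZ] with ω hω
        rw [abs_mul]
        exact mul_le_mul_of_nonneg_right hω (abs_nonneg _)
    _ = c * ∫ ω, |μ[g | m] ω| ∂μ := integral_const_mul c _
    _ ≤ c * ∫ ω, |g ω| ∂μ := mul_le_mul_of_nonneg_left (integral_abs_condExp_le g) hc

lemma ofReal_integral_abs_le_mul_eLpNorm_rpow [IsProbabilityMeasure μ] {E : Type*}
    [NormedAddCommGroup E] {g : Ω → ℝ} {D : Ω → E} {C α : ℝ} (hC : 0 ≤ C) (hα : 0 < α)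
    (hα1 : α ≤ 1) (hD : AEStronglyMeasurable D μ) (hgD : ∀ᵐ ω ∂μ, |g ω| ≤ C * ‖D ω‖ ^ α) :
    ENNReal.ofReal (∫ ω, |g ω| ∂μ) ≤ ENNReal.ofReal C * eLpNorm D 1 μ ^ α := by
  by_cases hg : Integrable (fun ω => |g ω|) μ
  swap
  · rw [integral_undef hg, ENNReal.ofReal_zero]
    exact zero_le
  rw [ofReal_integral_eq_lintegral_ofReal hg (ae_of_all _ fun ω => abs_nonneg _)]
  calc ∫⁻ ω, ENNReal.ofReal |g ω| ∂μ ≤ ∫⁻ ω, ENNReal.ofReal C * ‖D ω‖ₑ ^ α ∂μ := by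
        refine lintegral_mono_ae ?_
        filter_upwards [hgD] with ω hω
        rw [← ofReal_norm, ENNReal.ofReal_rpow_of_nonneg (norm_nonneg _) hα.le,
          ← ENNReal.ofReal_mul hC]
        exact ENNReal.ofReal_le_ofReal hω
    _ = ENNReal.ofReal C * eLpNorm' D α μ ^ α := by
        rw [lintegral_const_mul' _ _ ENNReal.ofReal_ne_top,
          lintegral_rpow_enorm_eq_rpow_eLpNorm' hα]
    _ ≤ ENNReal.ofReal C * eLpNorm D 1 μ ^ α := by
        rw [eLpNorm_eq_eLpNorm' one_ne_zero ENNReal.one_ne_top, ENNReal.toReal_one]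
        gcongr
        exact eLpNorm'_le_eLpNorm'_of_exponent_le hα hα1 μ hD

lemma ofReal_integral_abs_mul_condExp_le [IsProbabilityMeasure μ] {E : Type*}
    [NormedAddCommGroup E] {Z g : Ω → ℝ} {D : Ω → E} {c C α : ℝ} (hc : 0 ≤ c) (hC : 0 ≤ C)
    (hα : 0 < α) (hα1 : α ≤ 1) (hZ : ∀ᵐ ω ∂μ, |Z ω| ≤ c) (hD : AEStronglyMeasurable D μ)
    (hgD : ∀ᵐ ω ∂μ, |g ω| ≤ C * ‖D ω‖ ^ α) :
    ENNReal.ofReal (∫ ω, |Z ω * μ[g | m] ω| ∂μ) ≤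
      ENNReal.ofReal c * (ENNReal.ofReal C * eLpNorm D 1 μ ^ α) :=
  calc ENNReal.ofReal (∫ ω, |Z ω * μ[g | m] ω| ∂μ)
      ≤ ENNReal.ofReal (c * ∫ ω, |g ω| ∂μ) :=
        ENNReal.ofReal_le_ofReal (integral_abs_mul_condExp_le hc hZ g)
    _ = ENNReal.ofReal c * ENNReal.ofReal (∫ ω, |g ω| ∂μ) := ENNReal.ofReal_mul hc
    _ ≤ ENNReal.ofReal c * (ENNReal.ofReal C * eLpNorm D 1 μ ^ α) := by
        gcongr
        exact ofReal_integral_abs_le_mul_eLpNorm_rpow hC hα hα1 hD hgD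

end Moments

namespace ProbabilityTheory.iIndepFun

variable {Ω ι η 𝓧 : Type*} [MeasurableSpace Ω] [MeasurableSpace 𝓧] {P : Measure Ω}
  [IsProbabilityMeasure P] {ζ : ι → Ω → 𝓧}

lemma map_comp_eq_infinitePi (hmeas : ∀ i, Measurable (ζ i)) (hindep : iIndepFun ζ P) {i₀ : ι}
    (hident : ∀ i, P.map (ζ i) = P.map (ζ i₀)) {k : η → ι} (hk : k.Injective) :
    P.map (fun ω j => ζ (k j) ω) = Measure.infinitePi (fun _ : η => P.map (ζ i₀)) := by
  have : IsProbabilityMeasure (P.map (ζ i₀)) :=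
    Measure.isProbabilityMeasure_map (hmeas i₀).aemeasurable
  rw [(hindep.precomp hk).map_fun_eq_infinitePi_map fun j => hmeas (k j)]
  simp only [hident]

lemma identDistrib_comp (hmeas : ∀ i, Measurable (ζ i)) (hindep : iIndepFun ζ P) {i₀ : ι}
    (hident : ∀ i, P.map (ζ i) = P.map (ζ i₀)) {k l : η → ι} (hk : k.Injective)
    (hl : l.Injective) :
    IdentDistrib (fun ω j => ζ (k j) ω) (fun ω j => ζ (l j) ω) P P where
  aemeasurable_fst := (measurable_pi_lambda _ fun j => hmeas (k j)).aemeasurable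
  aemeasurable_snd := (measurable_pi_lambda _ fun j => hmeas (l j)).aemeasurable
  map_eq := by
    rw [hindep.map_comp_eq_infinitePi hmeas hident hk,
      hindep.map_comp_eq_infinitePi hmeas hident hl]

end ProbabilityTheory.iIndepFun

section Causal

/-- The index of the innovation entering `Ẋ_i` at lag `j`: `ξ_{i-j}` for `j < i`, and `ξ'_{i-j}`
otherwise, where `ξ_k = ζ (k, false)` and `ξ'_k = ζ (k, true)`. -/
def couplingIndex (i j : ℕ) : ℤ × Bool := ((i : ℤ) - j, decide (i ≤ j))

lemma couplingIndex_injective (i : ℕ) : (couplingIndex i).Injective := fun a b h => by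
  have := congrArg Prod.fst h
  simp only [couplingIndex] at this
  omega

lemma causalXdot_eq (G : (ℕ → 𝓧) → E) (ζ : ℤ × Bool → Ω → 𝓧) (i : ℕ) :
    causalXdot G (fun j => ζ (j, false)) (fun j => ζ (j, true)) i =
      fun ω => G (fun j => ζ (couplingIndex i j) ω) := by
  funext ω
  refine congrArg G (funext fun j => ?_)
  by_cases h : (j : ℤ) < i
  · simp [h, couplingIndex, show ¬ i ≤ j by omega]
  · simp [h, couplingIndex, show i ≤ j by omega]

/-- `M_0 = σ(ξ_0, ξ_{-1}, …)`. -/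
abbrev pastMeasurableSpace {Ω 𝓧 : Type*} [m𝓧 : MeasurableSpace 𝓧] (ζ : ℤ × Bool → Ω → 𝓧) :
    MeasurableSpace Ω :=
  ⨆ j : {j : ℤ // j ≤ 0}, MeasurableSpace.comap (ζ ((j : ℤ), false)) m𝓧

def pastIndices : Set (ℤ × Bool) := {p | p.2 = false ∧ p.1 ≤ 0}

lemma couplingIndex_notMem_pastIndices (i j : ℕ) : couplingIndex i j ∉ pastIndices := by
  rintro ⟨hb, hle⟩
  simp only [couplingIndex, decide_eq_false_iff_not] at hb hle
  omega

lemma pastMeasurableSpace_le_iSup_pastIndices {Ω 𝓧 : Type*} [m𝓧 : MeasurableSpace 𝓧]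
    (ζ : ℤ × Bool → Ω → 𝓧) :
    pastMeasurableSpace ζ ≤ ⨆ p ∈ pastIndices, MeasurableSpace.comap (ζ p) m𝓧 :=
  iSup_le fun j => le_biSup (fun p => MeasurableSpace.comap (ζ p) m𝓧) ⟨rfl, j.2⟩

variable {Ω 𝓧 E : Type*} {mΩ : MeasurableSpace Ω} [m𝓧 : MeasurableSpace 𝓧] [MeasurableSpace E]
  {P : Measure Ω} [IsProbabilityMeasure P] {ζ : ℤ × Bool → Ω → 𝓧}

lemma identDistrib_causalX (hmeas : ∀ p, Measurable (ζ p)) (hindep : iIndepFun ζ P)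
    (hident : ∀ p, P.map (ζ p) = P.map (ζ (0, false))) {G : (ℕ → 𝓧) → E} (hG : Measurable G)
    (i : ℕ) :
    IdentDistrib (causalX G (fun j => ζ (j, false)) i) (causalX G (fun j => ζ (j, false)) 0) P P :=
  (hindep.identDistrib_comp hmeas hident (k := fun j : ℕ => ((i : ℤ) - j, false))
    (l := fun j : ℕ => ((0 : ℤ) - j, false)) (fun a b h => by simp at h; omega)
    (fun a b h => by simp at h; omega)).comp hG

lemma identDistrib_causalXdot (hmeas : ∀ p, Measurable (ζ p)) (hindep : iIndepFun ζ P)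
    (hident : ∀ p, P.map (ζ p) = P.map (ζ (0, false))) {G : (ℕ → 𝓧) → E} (hG : Measurable G)
    (i : ℕ) :
    IdentDistrib (causalXdot G (fun j => ζ (j, false)) (fun j => ζ (j, true)) i)
      (causalX G (fun j => ζ (j, false)) 0) P P := by
  rw [causalXdot_eq]
  exact (hindep.identDistrib_comp hmeas hident (couplingIndex_injective i)
    (l := fun j : ℕ => ((0 : ℤ) - j, false)) (fun a b h => by simp at h; omega)).comp hG

lemma pastMeasurableSpace_le (hmeas : ∀ p, Measurable (ζ p)) : pastMeasurableSpace ζ ≤ mΩ :=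
  iSup_le fun _ => (hmeas _).comap_le

lemma measurable_causalXdot_iSup_compl_pastIndices {G : (ℕ → 𝓧) → E} (hG : Measurable G)
    (i : ℕ) :
    Measurable[⨆ p ∈ pastIndicesᶜ, MeasurableSpace.comap (ζ p) m𝓧]
      (causalXdot G (fun j => ζ (j, false)) (fun j => ζ (j, true)) i) := by
  rw [causalXdot_eq]
  refine hG.comp (@measurable_pi_lambda _ _ _ (_) _ _ fun j => ?_)
  exact measurable_iff_comap_le.mpr
    (le_biSup (fun p => MeasurableSpace.comap (ζ p) m𝓧) (couplingIndex_notMem_pastIndices i j))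

lemma condExp_causalXdot_pastMeasurableSpace (hmeas : ∀ p, Measurable (ζ p))
    (hindep : iIndepFun ζ P) (hident : ∀ p, P.map (ζ p) = P.map (ζ (0, false)))
    {Φ : (ℕ → 𝓧) → ℝ} (hΦ : Measurable Φ) (i : ℕ) :
    P[causalXdot Φ (fun j => ζ (j, false)) (fun j => ζ (j, true)) i | pastMeasurableSpace ζ]
      =ᵐ[P] fun _ => ∫ ω, causalX Φ (fun j => ζ (j, false)) 0 ω ∂P := by
  have hindep_past : Indep (⨆ p ∈ pastIndicesᶜ, MeasurableSpace.comap (ζ p) m𝓧)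
      (pastMeasurableSpace ζ) P :=
    indep_of_indep_of_le_right (indep_iSup_of_disjoint (fun p => (hmeas p).comap_le) hindep
      disjoint_compl_left) (pastMeasurableSpace_le_iSup_pastIndices ζ)
  rw [← (identDistrib_causalXdot hmeas hindep hident hΦ i).integral_eq]
  exact condExp_indep_eq (iSup₂_le fun p _ => (hmeas p).comap_le) (pastMeasurableSpace_le hmeas)
    (measurable_causalXdot_iSup_compl_pastIndices hΦ i).stronglyMeasurable hindep_past

lemma condExp_causalX_pastMeasurableSpace_ae_eq_condExp_sub (hmeas : ∀ p, Measurable (ζ p))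
    (hindep : iIndepFun ζ P) (hident : ∀ p, P.map (ζ p) = P.map (ζ (0, false)))
    {Φ : (ℕ → 𝓧) → ℝ} (hΦ : Measurable Φ)
    (hint : Integrable (causalX Φ (fun j => ζ (j, false)) 0) P)
    (hmean : ∫ ω, causalX Φ (fun j => ζ (j, false)) 0 ω ∂P = 0) (i : ℕ) :
    P[causalX Φ (fun j => ζ (j, false)) i | pastMeasurableSpace ζ] =ᵐ[P]
      P[causalX Φ (fun j => ζ (j, false)) i -
        causalXdot Φ (fun j => ζ (j, false)) (fun j => ζ (j, true)) i | pastMeasurableSpace ζ] := by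
  have hX := (identDistrib_causalX hmeas hindep hident hΦ i).integrable_iff.mpr hint
  have hXdot := (identDistrib_causalXdot hmeas hindep hident hΦ i).integrable_iff.mpr hint
  filter_upwards [condExp_sub hX hXdot (pastMeasurableSpace ζ),
    condExp_causalXdot_pastMeasurableSpace hmeas hindep hident hΦ i] with ω hsub hdot
  rw [hsub, Pi.sub_apply, hdot, hmean, sub_zero]

end Causal

theorem stmt16_general {Ω 𝓧 : Type*} [mΩ : MeasurableSpace Ω]
    [m𝓧 : MeasurableSpace 𝓧] {d : ℕ}
    (P : Measure Ω) [IsProbabilityMeasure P]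
    (ζ : ℤ × Bool → Ω → 𝓧) (hζmeas : ∀ jb, Measurable (ζ jb))
    (hζindep : iIndepFun ζ P)
    (hζident : ∀ jb, Measure.map (ζ jb) P = Measure.map (ζ (0, false)) P)
    (G : (ℕ → 𝓧) → (Fin d → ℝ)) (hG : Measurable G)
    (α : ℝ) (hα : 0 < α) (hα1 : α ≤ 1)
    (f : (Fin d → ℝ) → ℝ) (hf : MemHolderCl α f)
    (hf0 : (∫ ω, f (causalX G (fun j => ζ (j, false)) 0 ω) ∂P) = 0) :
    ∀ i : ℕ, 1 ≤ i →
      ENNReal.ofReal (∫ ω, |f (causalX G (fun j => ζ (j, false)) 0 ω) *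
          MeasureTheory.condExp
            (⨆ j : {j : ℤ // j ≤ 0}, MeasurableSpace.comap (ζ ((j : ℤ), false)) m𝓧)
            P (fun ω' => f (causalX G (fun j => ζ (j, false)) i ω')) ω| ∂P) ≤
        ENNReal.ofReal (holderNorm α f ^ 2) *
          pdm P G (fun j => ζ (j, false)) (fun j => ζ (j, true)) 1 i ^ α := by
  intro i _
  set ξ : ℤ → Ω → 𝓧 := fun j => ζ (j, false)
  set ξ' : ℤ → Ω → 𝓧 := fun j => ζ (j, true)
  have hfG : Measurable (f ∘ G) := (hf.measurable hα).comp hG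
  have hint : Integrable (causalX (f ∘ G) ξ 0) P :=
    .of_bound (hfG.comp (measurable_pi_lambda _ fun j => hζmeas _)).aestronglyMeasurable _
      (ae_of_all _ fun ω => hf.abs_le_supNorm _)
  have hcond := condExp_causalX_pastMeasurableSpace_ae_eq_condExp_sub hζmeas hζindep hζident hfG
    hint hf0 i
  have hD : AEStronglyMeasurable (fun ω => causalX G ξ i ω - causalXdot G ξ ξ' i ω) P :=
    ((identDistrib_causalX hζmeas hζindep hζident hG i).aemeasurable_fst.sub
      (identDistrib_causalXdot hζmeas hζindep hζident hG i).aemeasurable_fst).aestronglyMeasurable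
  set g := causalX (f ∘ G) ξ i - causalXdot (f ∘ G) ξ ξ' i
  calc ENNReal.ofReal
        (∫ ω, |f (causalX G ξ 0 ω) * P[causalX (f ∘ G) ξ i | pastMeasurableSpace ζ] ω| ∂P)
      = ENNReal.ofReal (∫ ω, |f (causalX G ξ 0 ω) * P[g | pastMeasurableSpace ζ] ω| ∂P) := by
        rw [integral_congr_ae (hcond.mono fun ω h =>
          congrArg (fun t => |f (causalX G ξ 0 ω) * t|) h)]
    _ ≤ ENNReal.ofReal (supNorm f) *
          (ENNReal.ofReal (holderSeminorm α f) * pdm P G ξ ξ' 1 i ^ α) :=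
        ofReal_integral_abs_mul_condExp_le hf.supNorm_nonneg (holderSeminorm_nonneg α f) hα hα1
          (ae_of_all _ fun ω => hf.abs_le_supNorm _) hD (ae_of_all _ fun ω => hf.abs_sub_le _ _)
    _ ≤ ENNReal.ofReal (holderNorm α f ^ 2) * pdm P G ξ ξ' 1 i ^ α := by
        rw [sq, ENNReal.ofReal_mul (hf.supNorm_nonneg.trans (supNorm_le_holderNorm α f)),
          mul_assoc]
        gcongr
        exacts [supNorm_le_holderNorm α f, hf.holderSeminorm_le_holderNorm]

/-- key estimate in the proof of Proposition 3 of the paper: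
for a causal function of an i.i.d. process and `f ∈ H_α` centered,
`E |f(X_0) E(f(X_i)|M_0)| ≤ ‖f‖_{H_α}² δ_{i,1}^α`, where `M_0 = σ(ξ_0, ξ_{-1}, …)`. -/
theorem stmt16 {Ω 𝓧 : Type*} [mΩ : MeasurableSpace Ω]
    [NormedAddCommGroup 𝓧] [NormedSpace ℝ 𝓧] [CompleteSpace 𝓧]
    [m𝓧 : MeasurableSpace 𝓧] [BorelSpace 𝓧] {d : ℕ}
    (P : Measure Ω) [IsProbabilityMeasure P]
    (ζ : ℤ × Bool → Ω → 𝓧) (hζmeas : ∀ jb, Measurable (ζ jb))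
    (hζindep : iIndepFun ζ P)
    (hζident : ∀ jb, Measure.map (ζ jb) P = Measure.map (ζ (0, false)) P)
    (G : (ℕ → 𝓧) → (Fin d → ℝ)) (hG : Measurable G)
    (α : ℝ) (hα : 0 < α) (hα1 : α ≤ 1)
    (f : (Fin d → ℝ) → ℝ) (hf : MemHolderCl α f)
    (hf0 : (∫ ω, f (causalX G (fun j => ζ (j, false)) 0 ω) ∂P) = 0) :
    ∀ i : ℕ, 1 ≤ i →
      ENNReal.ofReal (∫ ω, |f (causalX G (fun j => ζ (j, false)) 0 ω) *
          MeasureTheory.condExp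
            (⨆ j : {j : ℤ // j ≤ 0}, MeasurableSpace.comap (ζ ((j : ℤ), false)) m𝓧)
            P (fun ω' => f (causalX G (fun j => ζ (j, false)) i ω')) ω| ∂P) ≤
        ENNReal.ofReal (holderNorm α f ^ 2) *
          pdm P G (fun j => ζ (j, false)) (fun j => ζ (j, true)) 1 i ^ α :=
  stmt16_general (mΩ := mΩ) (m𝓧 := m𝓧) P ζ hζmeas hζindep hζident G hG α hα hα1 f hf hf0

end
end

section
/- Let F be the joint distribution function of an ℝ^d-valued random vector, let α > 0, β > 0, γ > 0, κ > 0, λ > 1, z_0 ≥ 0, and let Φ:[0,∞)→[0,∞) be an increasing bijection such that w_F(y) ≤ β ( Φ(y^{−α}) )^{−γ} for all y > 0 and Φ(2z) ≤ λ Φ(z) for all z ≥ z_0. Define Ψ(z) := d ( w_F^←(1/z) )^{−α} + 1 with w_F^←(y) := inf{ δ > 0 : w_F(δ) ≥ y }. Then there exists a constant C < ∞ such that ( Φ(2Ψ(z)) )^{κ} ≤ C z^{κ/γ} for all sufficiently large z; in particular ( Φ(2Ψ(z)) )^{κ} = O( z^{κ/γ} ) as z → ∞. -/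
/-!
Every `δ > 0` with `w_F(δ) ≥ 1/z` satisfies `Φ(δ^{-α})^γ ≤ βz`, hence
`δ^{-α} ≤ M := Φ⁻¹((βz)^{1/γ})`; by continuity of `δ ↦ δ^{-α}` this passes to the infimum
`w_F^←(1/z)`, so `2Ψ(z) ≤ 2^{d+1} M` once `M ≥ max z₀ 1`, i.e. for large `z`. Applying the
doubling condition `d + 1` times gives `Φ(2Ψ(z)) ≤ λ^{d+1} Φ(M) = λ^{d+1} (βz)^{1/γ}`.
-/

open MeasureTheory Filter Set

noncomputable section

/-- The modulus of continuity of a function `F : ℝ^d → ℝ`. -/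
def modulus {d : ℕ} (F : (Fin d → ℝ) → ℝ) (δ : ℝ) : ℝ :=
  sSup {c : ℝ | ∃ s t : Fin d → ℝ, ‖t - s‖ ≤ δ ∧ c = |F t - F s|}

/-- The generalized inverse `w_F^←(y) = inf{δ > 0 : w_F(δ) ≥ y}`. -/
def modulusInv {d : ℕ} (F : (Fin d → ℝ) → ℝ) (y : ℝ) : ℝ :=
  sInf {δ : ℝ | 0 < δ ∧ y ≤ modulus F δ}

theorem modulusInv_nonneg {d : ℕ} (F : (Fin d → ℝ) → ℝ) (y : ℝ) : 0 ≤ modulusInv F y :=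
  Real.sInf_nonneg fun _ hδ => hδ.1.le

namespace Real

theorem sInf_rpow_neg_le {S : Set ℝ} {α M : ℝ} (hα : 0 < α) (hM : 0 ≤ M)
    (hS : ∀ δ ∈ S, 0 < δ) (h : ∀ δ ∈ S, δ ^ (-α) ≤ M) : sInf S ^ (-α) ≤ M := by
  rcases (sInf_nonneg fun δ hδ => (hS δ hδ).le).eq_or_lt with h0 | hpos
  · rwa [← h0, zero_rpow (neg_ne_zero.mpr hα.ne')]
  have hne : S.Nonempty := by
    by_contra hempty
    rw [not_nonempty_iff_eq_empty.mp hempty, sInf_empty] at hpos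
    exact hpos.false
  exact (continuousAt_rpow_const _ _ (Or.inl hpos.ne')).continuousWithinAt.closure_le
    (csInf_mem_closure hne ⟨0, fun δ hδ => (hS δ hδ).le⟩) continuousWithinAt_const h

theorem le_rpow_inv_of_one_div_le_mul_rpow_neg {u β z γ : ℝ} (hu : 0 ≤ u) (hβ : 0 ≤ β)
    (hz : 0 < z) (hγ : 0 < γ) (h : 1 / z ≤ β * u ^ (-γ)) : u ≤ (β * z) ^ γ⁻¹ := by
  rcases hu.eq_or_lt with rfl | hu
  · positivity
  rw [le_rpow_inv_iff_of_pos hu.le (by positivity) hγ]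
  rw [rpow_neg hu.le, ← div_eq_mul_inv, div_le_div_iff₀ hz (rpow_pos_of_pos hu γ)] at h
  linarith

theorem rpow_le_mul_rpow_div_of_le {u A β z γ κ : ℝ} (hu : 0 ≤ u) (hA : 0 ≤ A) (hβ : 0 ≤ β)
    (hz : 0 ≤ z) (hκ : 0 ≤ κ) (h : u ≤ A * (β * z) ^ γ⁻¹) :
    u ^ κ ≤ (A * β ^ γ⁻¹) ^ κ * z ^ (κ / γ) :=
  calc u ^ κ ≤ (A * (β * z) ^ γ⁻¹) ^ κ := rpow_le_rpow hu h hκ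
    _ = (A * β ^ γ⁻¹) ^ κ * z ^ (κ / γ) := by
      rw [mul_rpow hβ hz, ← mul_assoc, mul_rpow (by positivity) (by positivity),
        ← rpow_mul hz, inv_mul_eq_div]

end Real

theorem le_pow_mul_of_doubling {f : ℝ → ℝ} {lam z₀ : ℝ} (hlam : 0 ≤ lam)
    (hdouble : ∀ z, z₀ ≤ z → f (2 * z) ≤ lam * f z) {x : ℝ} (hx : 0 ≤ x) (hz₀x : z₀ ≤ x) :
    ∀ n : ℕ, f (2 ^ n * x) ≤ lam ^ n * f x
  | 0 => by simp
  | n + 1 =>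
    calc f (2 ^ (n + 1) * x) = f (2 * (2 ^ n * x)) := by ring_nf
      _ ≤ lam * f (2 ^ n * x) :=
        hdouble _ (hz₀x.trans (le_mul_of_one_le_left hx (one_le_pow₀ one_le_two)))
      _ ≤ lam * (lam ^ n * f x) :=
        mul_le_mul_of_nonneg_left (le_pow_mul_of_doubling hlam hdouble hx hz₀x n) hlam
      _ = lam ^ (n + 1) * f x := by ring

theorem two_mul_natCast_mul_add_one_le (d : ℕ) {a x : ℝ} (ha : a ≤ x) (hx : 1 ≤ x) :
    2 * (d * a + 1) ≤ 2 ^ (d + 1) * x := by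
  have hd : (d : ℝ) + 1 ≤ 2 ^ d := by exact_mod_cast Nat.lt_two_pow_self
  rw [pow_succ]
  nlinarith [mul_le_mul_of_nonneg_left ha d.cast_nonneg,
    mul_le_mul_of_nonneg_right hd (zero_le_one.trans hx)]

theorem modulusInv_rpow_neg_le {d : ℕ} {F : (Fin d → ℝ) → ℝ} {α β γ : ℝ} (hα : 0 < α)
    (hβ : 0 ≤ β) (hγ : 0 < γ) {Φ Φinv : ℝ → ℝ} (hΦmono : StrictMonoOn Φ (Ici 0))
    (hΦmaps : MapsTo Φ (Ici 0) (Ici 0))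
    (hinv : ∀ y ∈ Ici (0 : ℝ), Φ (Φinv y) = y ∧ Φinv y ∈ Ici (0 : ℝ))
    (hbound : ∀ y : ℝ, 0 < y → modulus F y ≤ β * (Φ (y ^ (-α))) ^ (-γ)) {z : ℝ} (hz : 0 < z) :
    modulusInv F (1 / z) ^ (-α) ≤ Φinv ((β * z) ^ γ⁻¹) := by
  obtain ⟨hΦΦinv, hΦinv_nonneg⟩ := hinv ((β * z) ^ γ⁻¹) (mem_Ici.2 (by positivity))
  refine Real.sInf_rpow_neg_le hα hΦinv_nonneg (fun δ hδ => hδ.1) fun δ ⟨hδ, hwδ⟩ => ?_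
  have hδα : 0 ≤ δ ^ (-α) := by positivity
  rw [← hΦmono.le_iff_le hδα hΦinv_nonneg, hΦΦinv]
  exact Real.le_rpow_inv_of_one_div_le_mul_rpow_neg (hΦmaps hδα) hβ hz hγ
    (hwδ.trans (hbound δ hδ))

theorem stmt18_general {d : ℕ}
    (F : (Fin d → ℝ) → ℝ)
    (α β γ κ lam z₀ : ℝ) (hα : 0 < α) (hβ : 0 < β) (hγ : 0 < γ) (hκ : 0 < κ)
    (hlam : 1 < lam)
    (Φ Φinv : ℝ → ℝ)
    (hΦmono : StrictMonoOn Φ (Set.Ici 0))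
    (hΦmaps : Set.MapsTo Φ (Set.Ici 0) (Set.Ici 0))
    (hinv₂ : ∀ y ∈ Set.Ici (0 : ℝ), Φ (Φinv y) = y ∧ Φinv y ∈ Set.Ici (0 : ℝ))
    (hbound : ∀ y : ℝ, 0 < y → modulus F y ≤ β * (Φ (y ^ (-α))) ^ (-γ))
    (hdouble : ∀ z : ℝ, z₀ ≤ z → Φ (2 * z) ≤ lam * Φ z)
    (Ψ : ℝ → ℝ) (hΨ : Ψ = fun z => (d : ℝ) * (modulusInv F (1 / z)) ^ (-α) + 1) :
    ∃ C z₁ : ℝ, ∀ z : ℝ, z₁ ≤ z → (Φ (2 * Ψ z)) ^ κ ≤ C * z ^ (κ / γ) := by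
  subst hΨ
  set c := max z₀ 1
  refine ⟨(lam ^ (d + 1) * β ^ γ⁻¹) ^ κ, max 1 (Φ c ^ γ / β), fun z hz => ?_⟩
  have hz0 : 0 < z := zero_lt_one.trans_le (le_of_max_le_left hz)
  set M := Φinv ((β * z) ^ γ⁻¹)
  obtain ⟨hΦM, hM0⟩ := hinv₂ ((β * z) ^ γ⁻¹) (mem_Ici.2 (by positivity))
  have hc0 : 0 ≤ c := zero_le_one.trans (le_max_right _ _)
  have hcM : c ≤ M := by
    rw [← hΦmono.le_iff_le hc0 hM0, hΦM,
      Real.le_rpow_inv_iff_of_pos (hΦmaps hc0) (by positivity) hγ, ← div_le_iff₀' hβ]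
    exact le_of_max_le_right hz
  have hΨM : 2 * (d * modulusInv F (1 / z) ^ (-α) + 1) ≤ 2 ^ (d + 1) * M :=
    two_mul_natCast_mul_add_one_le d
      (modulusInv_rpow_neg_le hα hβ.le hγ hΦmono hΦmaps hinv₂ hbound hz0)
      ((le_max_right _ _).trans hcM)
  have hΨ0 : 0 ≤ 2 * (d * modulusInv F (1 / z) ^ (-α) + 1) := by
    have := Real.rpow_nonneg (modulusInv_nonneg F (1 / z)) (-α)
    positivity
  have hΦΨ : Φ (2 * (d * modulusInv F (1 / z) ^ (-α) + 1)) ≤ lam ^ (d + 1) * (β * z) ^ γ⁻¹ :=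
    calc _ ≤ Φ (2 ^ (d + 1) * M) :=
          hΦmono.monotoneOn hΨ0 (mem_Ici.2 (mul_nonneg (by positivity) hM0)) hΨM
      _ ≤ lam ^ (d + 1) * Φ M :=
          le_pow_mul_of_doubling (zero_le_one.trans hlam.le) hdouble hM0
            ((le_max_left _ _).trans hcM) _
      _ = lam ^ (d + 1) * (β * z) ^ γ⁻¹ := by rw [hΦM]
  exact Real.rpow_le_mul_rpow_div_of_le (hΦmaps hΨ0) (by positivity) hβ.le hz0.le
    hκ.le hΦΨ

/-- key step in the proof of Theorem 3 of the paper: if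
`w_F(y) ≤ β Φ(y^{-α})^{-γ}` for an increasing bijection `Φ` of `[0,∞)` satisfying the
doubling condition `Φ(2z) ≤ λ Φ(z)` for `z ≥ z₀`, and `Ψ(z) = d (w_F^←(1/z))^{-α} + 1`,
then `Φ(2Ψ(z))^κ = O(z^{κ/γ})` as `z → ∞`. -/
theorem stmt18 {Ω : Type*} [MeasurableSpace Ω] {d : ℕ}
    (P : Measure Ω) [IsProbabilityMeasure P]
    (X : Ω → (Fin d → ℝ)) (hX : Measurable X)
    (F : (Fin d → ℝ) → ℝ) (hF : F = fun t => (P {ω | ∀ i, X ω i ≤ t i}).toReal)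
    (α β γ κ lam z₀ : ℝ) (hα : 0 < α) (hβ : 0 < β) (hγ : 0 < γ) (hκ : 0 < κ)
    (hlam : 1 < lam) (hz₀ : 0 ≤ z₀)
    (Φ Φinv : ℝ → ℝ)
    (hΦmono : StrictMonoOn Φ (Set.Ici 0))
    (hΦmaps : Set.MapsTo Φ (Set.Ici 0) (Set.Ici 0))
    (hinv₁ : ∀ x ∈ Set.Ici (0 : ℝ), Φinv (Φ x) = x)
    (hinv₂ : ∀ y ∈ Set.Ici (0 : ℝ), Φ (Φinv y) = y ∧ Φinv y ∈ Set.Ici (0 : ℝ))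
    (hbound : ∀ y : ℝ, 0 < y → modulus F y ≤ β * (Φ (y ^ (-α))) ^ (-γ))
    (hdouble : ∀ z : ℝ, z₀ ≤ z → Φ (2 * z) ≤ lam * Φ z)
    (Ψ : ℝ → ℝ) (hΨ : Ψ = fun z => (d : ℝ) * (modulusInv F (1 / z)) ^ (-α) + 1) :
    ∃ C z₁ : ℝ, ∀ z : ℝ, z₁ ≤ z → (Φ (2 * Ψ z)) ^ κ ≤ C * z ^ (κ / γ) :=
  stmt18_general F α β γ κ lam z₀ hα hβ hγ hκ hlam Φ Φinv hΦmono hΦmaps hinv₂ hbound hdouble Ψ hΨ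

end
end
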